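/- For z = θ + iφ with θ, φ ∈ ℝ, one has the factorization cos z + sin z·I = (cosh φ + i sinh φ·I)·(cos θ + sin θ·I) in ℍ^ℂ, and consequently S¹_ℂ = {cos z + sin z·I : z ∈ ℂ} equals the set of products Spin(1,1)·Spin(2), where Spin(1,1) = {±(cosh φ + i sinh φ·I) : φ ∈ ℝ} and Spin(2) = {cos θ + sin θ·I : θ ∈ ℝ}. -/

import Mathlib

/-!
On the plane `ℂ·1 + ℂ·I ⊂ ℍ^ℂ` the quaternion `I` squares to `-1`, so `c(z) = cos z + sin z·I`
satisfies the addition formula `c(z + w) = c(z) c(w)`. Splitting `z = iφ + θ` gives the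
factorization, with `c(iφ) = cosh φ + i sinh φ·I` and `c(θ) ∈ Spin(2)`; the sign `-1` of
`Spin(1,1)` is absorbed by `c(z + π) = -c(z)`.
-/

noncomputable section

/-- The algebra of complex quaternions `ℍ^ℂ`. -/
abbrev HC := Quaternion ℂ

def qI : HC := ⟨0, 1, 0, 0⟩
def qJ : HC := ⟨0, 0, 1, 0⟩
def qK : HC := ⟨0, 0, 0, 1⟩

/-- The complex bilinear form `H(ξ,ξ') = q₀q₀' + q₁q₁' + q₂q₂' + q₃q₃'`. -/
def Hform (x y : HC) : ℂ :=
  x.re * y.re + x.imI * y.imI + x.imJ * y.imJ + x.imK * y.imK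

/-- Coefficientwise complex conjugation `ξ̂`.  (The quaternionic conjugate
`ξ̄` is `star ξ`.) -/
def qhat (x : HC) : HC :=
  ⟨(starRingEnd ℂ) x.re, (starRingEnd ℂ) x.imI, (starRingEnd ℂ) x.imJ, (starRingEnd ℂ) x.imK⟩

/-- Membership in the Minkowski space `V = {ix₀1 + x₁I + x₂J + x₃K : xᵢ ∈ ℝ} ⊂ ℍ^ℂ`. -/
def inV (ξ : HC) : Prop :=
  ∃ x₀ x₁ x₂ x₃ : ℝ,
    ξ = (Complex.I * (x₀ : ℂ)) • (1 : HC) + (x₁ : ℂ) • qI + (x₂ : ℂ) • qJ + (x₃ : ℂ) • qK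

open Complex

def qcis (z : ℂ) : HC := cos z • (1 : HC) + sin z • qI

@[simp] lemma re_qI : qI.re = 0 := rfl
@[simp] lemma imI_qI : qI.imI = 1 := rfl
@[simp] lemma imJ_qI : qI.imJ = 0 := rfl
@[simp] lemma imK_qI : qI.imK = 0 := rfl

lemma smul_one_add_smul_qI_mul (a b c d : ℂ) :
    (a • (1 : HC) + b • qI) * (c • (1 : HC) + d • qI) =
      (a * c - b * d) • (1 : HC) + (a * d + b * c) • qI := by
  ext <;> simp [Quaternion.re_one, Quaternion.imI_one, Quaternion.imJ_one, Quaternion.imK_one]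

lemma qcis_add (z w : ℂ) : qcis (z + w) = qcis z * qcis w := by
  rw [qcis, qcis, qcis, smul_one_add_smul_qI_mul, cos_add, sin_add, add_comm (cos z * sin w)]

lemma qcis_add_pi (z : ℂ) : qcis (z + Real.pi) = -qcis z := by
  rw [qcis, qcis, cos_add_pi, sin_add_pi]
  module

lemma qcis_ofReal (θ : ℝ) :
    qcis θ = (Real.cos θ : ℂ) • (1 : HC) + (Real.sin θ : ℂ) • qI := by
  rw [qcis, ofReal_cos, ofReal_sin]

lemma qcis_ofReal_mul_I (φ : ℝ) :
    qcis (φ * I) = (Real.cosh φ : ℂ) • (1 : HC) + (I * (Real.sinh φ : ℂ)) • qI := by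
  rw [qcis, cos_mul_I, sin_mul_I, ofReal_cosh, ofReal_sinh, mul_comm (sinh φ)]

lemma qcis_ofReal_add_mul_I (θ φ : ℝ) :
    qcis (θ + φ * I) =
      ((Real.cosh φ : ℂ) • (1 : HC) + (I * (Real.sinh φ : ℂ)) • qI) *
        ((Real.cos θ : ℂ) • (1 : HC) + (Real.sin θ : ℂ) • qI) := by
  rw [add_comm, qcis_add, qcis_ofReal_mul_I, qcis_ofReal]

/-- For `z = θ + iφ`: `cos z + sin z·I = (cosh φ + i sinh φ·I)(cos θ + sin θ·I)`,
and consequently `S¹_ℂ = Spin(1,1)·Spin(2)`. -/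
theorem stmt7 :
    (∀ θ φ : ℝ,
      Complex.cos ((θ : ℂ) + (φ : ℂ) * Complex.I) • (1 : HC)
          + Complex.sin ((θ : ℂ) + (φ : ℂ) * Complex.I) • qI
        = (((Real.cosh φ : ℂ)) • (1 : HC) + (Complex.I * (Real.sinh φ : ℂ)) • qI)
          * (((Real.cos θ : ℂ)) • (1 : HC) + ((Real.sin θ : ℂ)) • qI)) ∧
    {q : HC | ∃ z : ℂ, q = Complex.cos z • (1 : HC) + Complex.sin z • qI} =
      {q : HC | ∃ a b : HC,
        (∃ φ : ℝ,
          a = (Real.cosh φ : ℂ) • (1 : HC) + (Complex.I * (Real.sinh φ : ℂ)) • qI ∨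
          a = -((Real.cosh φ : ℂ) • (1 : HC) + (Complex.I * (Real.sinh φ : ℂ)) • qI)) ∧
        (∃ θ : ℝ, b = (Real.cos θ : ℂ) • (1 : HC) + (Real.sin θ : ℂ) • qI) ∧
        q = a * b} := by
  refine ⟨qcis_ofReal_add_mul_I, Set.ext fun q => ⟨?_, ?_⟩⟩
  · rintro ⟨z, rfl⟩
    refine ⟨_, _, ⟨z.im, Or.inl rfl⟩, ⟨z.re, rfl⟩, ?_⟩
    rw [← qcis_ofReal_add_mul_I, re_add_im, qcis]
  · rintro ⟨a, b, ⟨φ, rfl | rfl⟩, ⟨θ, rfl⟩, rfl⟩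
    · exact ⟨θ + φ * I, (qcis_ofReal_add_mul_I θ φ).symm⟩
    · refine ⟨φ * I + Real.pi + θ, ?_⟩
      rw [← qcis_ofReal_mul_I, ← qcis_ofReal, ← qcis_add_pi, ← qcis_add]
      rfl
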